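/- arXiv:math/0611528 — 4 statements merged into one kernel-verified Lean document; each statement's English description precedes it below -/
import Mathlib

section
/- Let A be a commutative Q-algebra and F an A-module. For n ≥ 2, define the switch operator σ on the module R^n(F) := S^{n-1}(F) ⊗_A F (where S denotes the symmetric power) by σ(m_1⋯m_n) = Σ_{i=1}^{n-1} m_n m_{n-1}⋯m_{n-i+1} m_1 m_2⋯m_{n-i}, i.e., the sum of the n-1 nontrivial cyclic rotations. Then σ is a well-defined A-linear map on R^n(F), i.e., it respects the symmetry in the first n-1 factors. -/
open scoped TensorProduct

noncomputable section

variable (A : Type) [CommRing A]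
variable (F : Type) [AddCommGroup F] [Module A F]

/-- `n`-fold tensor power `T^n(F)`. -/
abbrev TPow (n : ℕ) := PiTensorProduct A (fun _ : Fin n => F)

/-- The submodule of symmetry relations. -/
def symRel (n : ℕ) : Submodule A (TPow A F n) :=
  Submodule.span A
    {x | ∃ (m : Fin n → F) (e : Equiv.Perm (Fin n)),
      x = PiTensorProduct.tprod A m - PiTensorProduct.tprod A (m ∘ e)}

/-- Symmetric power `S^n(F)`. -/
abbrev SymPow (n : ℕ) := TPow A F n ⧸ symRel A F n

/-- Class of the word `m₀ ⋯ m_{n-1}` in `S^n(F)`. -/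
def mkS {n : ℕ} (m : Fin n → F) : SymPow A F n :=
  Submodule.Quotient.mk (PiTensorProduct.tprod A m)

/-- Class of a list of elements of `F` in the symmetric power. -/
def mkSL (l : List F) : SymPow A F l.length := mkS A F l.get

/-- `RPow A F n` is `R^{n+1}(F) = S^n(F) ⊗_A F`. -/
abbrev RPow (n : ℕ) := SymPow A F n ⊗[A] F

/-- Class of the word `m₀ ⋯ m_n` in `R^{n+1}(F) = S^n(F) ⊗ F`. -/
def mkR {n : ℕ} (m : Fin (n + 1) → F) : RPow A F n :=
  mkS A F (fun i : Fin n => m i.castSucc) ⊗ₜ[A] m (Fin.last n)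

/-- The `i`-th "rotation" of the word `m` appearing in the definition of the
switch operator: `m_n m_{n-1} ⋯ m_{n-i+1} m_0 m_1 ⋯ m_{n-i}` (0-indexed). -/
def rot {n : ℕ} (m : Fin (n + 1) → F) (i : ℕ) : Fin (n + 1) → F := fun j =>
  if j.val < i then m ⟨n - j.val, by have := j.isLt; omega⟩
  else m ⟨j.val - i, by have := j.isLt; omega⟩

/-- `σ` is the switch operator on `R^{n+1}(F)`:
`σ(m_0⋯m_n) = ∑_{i=1}^{n} m_n m_{n-1}⋯m_{n-i+1} m_0 m_1 ⋯ m_{n-i}`. -/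
def IsSwitch (n : ℕ) (σ : RPow A F n →ₗ[A] RPow A F n) : Prop :=
  ∀ m : Fin (n + 1) → F,
    σ (mkR A F m) = ∑ i ∈ Finset.Icc 1 n, mkR A F (rot F m i)

/-- `K^{n+1}(F) = σ*(R^{n+1}(F))`, described by its generators `σ*(m_0⋯m_n)`. -/
def KSub (n : ℕ) : Submodule A (RPow A F n) :=
  Submodule.span A
    {x | ∃ m : Fin (n + 1) → F,
      x = mkR A F m + ∑ i ∈ Finset.Icc 1 n, mkR A F (rot F m i)}

/-- `K²(F) ⊆ T²(F) = F ⊗ F`: the kernel of `T²(F) → Λ²(F)`, i.e. the image of `1 + σ`. -/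
def K2Sub : Submodule A (F ⊗[A] F) :=
  Submodule.span A {x | ∃ u v : F, x = u ⊗ₜ[A] v + v ⊗ₜ[A] u}

/-- The word `m₀ ⋯ m_{p-1} u m'₀ ⋯ m'_{q-1}`. -/
def joinWord {p q : ℕ} (m : Fin p → F) (u : F) (m' : Fin q → F) :
    Fin (p + q + 1) → F := fun j =>
  if h : j.val < p then m ⟨j.val, h⟩
  else if _h2 : j.val < p + 1 then u
  else m' ⟨j.val - (p + 1), by have := j.isLt; omega⟩

/-- The concatenated word `m₀ ⋯ m_{p-1} m'₀ ⋯ m'_{q-1}`. -/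
def appendWord {p q : ℕ} (m : Fin p → F) (m' : Fin q → F) : Fin (p + q) → F := fun j =>
  if h : j.val < p then m ⟨j.val, h⟩
  else m' ⟨j.val - p, by have := j.isLt; omega⟩

/-- `mul` is the multiplication `R^{p+1}(F) × R^{q+1}(F) → R^{p+q+2}(F)` of the graded
algebra `R(F)`, recorded with values in `∏ₖ R^{k+1}(F)`:
`(s ⊗ u)·(s' ⊗ v) = (s u s') ⊗ v`. -/
def IsMulR (mul : ∀ p q, RPow A F p →ₗ[A] RPow A F q →ₗ[A] ∀ k, RPow A F k) : Prop :=
  ∀ (p q : ℕ) (m : Fin p → F) (u : F) (m' : Fin q → F) (v : F),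
    mul p q (mkS A F m ⊗ₜ[A] u) (mkS A F m' ⊗ₜ[A] v)
      = Pi.single (p + q + 1) (mkS A F (joinWord F m u m') ⊗ₜ[A] v)

/-- `mul` is the multiplication `S^p(F) × S^q(F) → S^{p+q}(F)` of the symmetric algebra,
recorded with values in `∏ₖ S^k(F)`. -/
def IsMulS (mul : ∀ p q, SymPow A F p →ₗ[A] SymPow A F q →ₗ[A] ∀ k, SymPow A F k) : Prop :=
  ∀ (p q : ℕ) (m : Fin p → F) (m' : Fin q → F),
    mul p q (mkS A F m) (mkS A F m') = Pi.single (p + q) (mkS A F (appendWord F m m'))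

/-- `π` is the family of natural maps `R^{n+1}(F) = S^n(F) ⊗ F → S^{n+1}(F)`. -/
def IsPi (π : ∀ n, RPow A F n →ₗ[A] SymPow A F (n + 1)) : Prop :=
  ∀ (n : ℕ) (m : Fin n → F) (v : F),
    π n (mkS A F m ⊗ₜ[A] v) = mkS A F (Fin.snoc m v)

/-- `T = (T₀, T₁, …)` is a (full) extended `D`-connection:  `T₀ = id_F` (under
`F ≅ R¹(F)`), and `T_i(am) = a T_i(m) + ∑_{j=1}^i (1/j) T_{j-1}(D a) T_{i-j}(m)`. -/
def IsExtConn [Algebra ℚ A] (D : A → F)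
    (mul : ∀ p q, RPow A F p →ₗ[A] RPow A F q →ₗ[A] ∀ k, RPow A F k)
    (T : ∀ i, F →+ RPow A F i) : Prop :=
  (∀ m : F, T 0 m = mkS A F (fun i : Fin 0 => i.elim0) ⊗ₜ[A] m) ∧
  ∀ (i : ℕ), 1 ≤ i → ∀ (a : A) (m : F),
    Pi.single i (T i (a • m))
      = Pi.single i (a • T i m)
        + ∑ j ∈ Finset.Icc 1 i,
            algebraMap ℚ A (1 / (j : ℚ)) •
              mul (j - 1) (i - j) (T (j - 1) (D a)) (T (i - j) m)

/-- `T = (T₀, …, T_N)` is an extended `D`-connection up to order `N`. -/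
def IsExtConnTo [Algebra ℚ A] (D : A → F)
    (mul : ∀ p q, RPow A F p →ₗ[A] RPow A F q →ₗ[A] ∀ k, RPow A F k)
    (N : ℕ) (T : ∀ i, F →+ RPow A F i) : Prop :=
  (∀ m : F, T 0 m = mkS A F (fun i : Fin 0 => i.elim0) ⊗ₜ[A] m) ∧
  ∀ (i : ℕ), 1 ≤ i → i ≤ N → ∀ (a : A) (m : F),
    Pi.single i (T i (a • m))
      = Pi.single i (a • T i m)
        + ∑ j ∈ Finset.Icc 1 i,
            algebraMap ℚ A (1 / (j : ℚ)) •
              mul (j - 1) (i - j) (T (j - 1) (D a)) (T (i - j) m)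

/-- The wedge map `F ⊗_A F →  Λ(F)`, `u ⊗ v ↦ u ∧ v`; an element of `F ⊗ F` maps to
zero in `Λ²(F)` iff its image under this map is zero. -/
def wedgeMap : F ⊗[A] F →ₗ[A] ExteriorAlgebra A F :=
  TensorProduct.lift
    ((LinearMap.mul A (ExteriorAlgebra A F)).compl₁₂ (ExteriorAlgebra.ι A) (ExteriorAlgebra.ι A))


/-! Modulo the symmetry of the first `n` slots, the `i`-th rotation of `m₀ ⋯ m_n` is the word
with `m_{n-i}` and `m_n` exchanged: the rotation is that transposition followed by a permutation
fixing the last slot. So `σ` should be induced by the multilinear map `m ↦ ∑ₖ m ∘ (k n)` on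
`T^{n+1}(F)`. On `s ⊗ u` with `s = m₀ ⋯ m_{n-1}` this reads `∑ₖ (s with m_k replaced by u) ⊗ m_k`,
which is invariant under permuting the `m_k`, hence descends to `S^n(F) ⊗ F`. -/

theorem Fin.sum_univ_sub_eq_sum_Icc {M : Type*} [AddCommMonoid M] (n : ℕ) (f : ℕ → M) :
    ∑ k : Fin n, f (n - k) = ∑ i ∈ Finset.Icc 1 n, f i := by
  refine Finset.sum_bij' (fun k _ => n - k) (fun i hi => ⟨n - i, ?_⟩) ?_ ?_ ?_ ?_ ?_
  · have := Finset.mem_Icc.mp hi; omega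
  · intro k _; simp only [Finset.mem_Icc]; omega
  · simp
  · intro k _; ext; simp only; omega
  · intro i hi; have := Finset.mem_Icc.mp hi; simp only; omega
  · simp

def rotPerm (n i : ℕ) : Equiv.Perm (Fin (n + 1)) :=
  Equiv.ofBijective
    (fun j => if j.val < i then ⟨n - j.val, by omega⟩ else ⟨j.val - i, by omega⟩)
    (Finite.injective_iff_bijective.mp fun a b hab => by
      have := congrArg Fin.val hab
      split_ifs at this <;> ext <;> simp_all <;> omega)

theorem rotPerm_sub_last {n : ℕ} (k : Fin n) : rotPerm n (n - k) (Fin.last n) = k.castSucc := by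
  ext
  simp only [rotPerm, Equiv.ofBijective_apply, Fin.val_last]
  split_ifs <;> simp <;> omega

theorem rot_eq_comp_rotPerm {α : Type} {n : ℕ} (m : Fin (n + 1) → α) (i : ℕ) :
    rot α m i = m ∘ rotPerm n i := by
  funext j
  simp only [rot, rotPerm, Function.comp_apply, Equiv.ofBijective_apply]
  split_ifs <;> rfl

section Switch

variable {A F}

theorem mkS_comp_perm {n : ℕ} (w : Fin n → F) (e : Equiv.Perm (Fin n)) :
    mkS A F (w ∘ e) = mkS A F w := by
  refine (Submodule.Quotient.eq _).mpr ?_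
  rw [← neg_mem_iff, neg_sub]
  exact Submodule.subset_span ⟨w, e, rfl⟩

theorem mkR_comp_perm_of_apply_last {n : ℕ} (m : Fin (n + 1) → F)
    {e : Equiv.Perm (Fin (n + 1))} (he : e (Fin.last n) = Fin.last n) :
    mkR A F (m ∘ e) = mkR A F m := by
  have hne (j : Fin n) : e j.castSucc ≠ Fin.last n := by
    rw [← he, e.injective.ne_iff]
    exact (Fin.castSucc_lt_last j).ne
  let f : Fin n → Fin n := fun j => (e j.castSucc).castPred (hne j)
  have hf : Function.Injective f := fun i j hij => by
    simpa [f] using hij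
  let e' : Equiv.Perm (Fin n) := Equiv.ofBijective f (Finite.injective_iff_bijective.mp hf)
  have hinit : (fun j : Fin n => (m ∘ e) j.castSucc) = (fun j : Fin n => m j.castSucc) ∘ e' := by
    funext j
    simp [e', f]
  unfold mkR
  rw [hinit, mkS_comp_perm, Function.comp_apply, he]

theorem mkR_rot_sub {n : ℕ} (m : Fin (n + 1) → F) (k : Fin n) :
    mkR A F (rot F m (n - k)) = mkR A F (m ∘ Equiv.swap k.castSucc (Fin.last n)) := by
  have hlast : (Equiv.swap k.castSucc (Fin.last n) * rotPerm n (n - k)) (Fin.last n)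
      = Fin.last n := by
    rw [Equiv.Perm.mul_apply, rotPerm_sub_last, Equiv.swap_apply_left]
  rw [rot_eq_comp_rotPerm,
    ← Equiv.swap_mul_self_mul k.castSucc (Fin.last n) (rotPerm n (n - k)), Equiv.Perm.coe_mul,
    ← Function.comp_assoc, mkR_comp_perm_of_apply_last _ hlast]

theorem mkR_snoc_comp_swap {n : ℕ} (w : Fin n → F) (u : F) (k : Fin n) :
    mkR A F (Fin.snoc w u ∘ Equiv.swap k.castSucc (Fin.last n))
      = mkS A F (Function.update w k u) ⊗ₜ[A] w k := by
  have hinit : (fun j : Fin n => (Fin.snoc w u ∘ Equiv.swap k.castSucc (Fin.last n))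
      (j.castSucc : Fin (n + 1))) = Function.update w k u := by
    funext j
    rcases eq_or_ne j k with rfl | hjk
    · simp
    · rw [Function.comp_apply, Equiv.swap_apply_of_ne_of_ne
        ((Fin.castSucc_injective n).ne hjk) (Fin.castSucc_lt_last j).ne]
      simp [hjk]
  unfold mkR
  rw [hinit]
  simp

theorem sum_mkS_update_tmul_comp_perm {n : ℕ} (w : Fin n → F) (u : F) (e : Equiv.Perm (Fin n)) :
    ∑ k, mkS A F (Function.update (w ∘ e) k u) ⊗ₜ[A] (w ∘ e) k
      = ∑ k, mkS A F (Function.update w k u) ⊗ₜ[A] w k := by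
  rw [← Equiv.sum_comp e (fun k => mkS A F (Function.update w k u) ⊗ₜ[A] w k)]
  refine Finset.sum_congr rfl fun k _ => ?_
  have hupdate : Function.update (w ∘ e) k u = Function.update w (e k) u ∘ e := by
    rw [Function.update_comp_equiv, e.symm_apply_apply]
  rw [hupdate, mkS_comp_perm]
  rfl

variable (A F)

def mkRMultilinear (n : ℕ) : MultilinearMap A (fun _ : Fin (n + 1) => F) (RPow A F n) :=
  MultilinearMap.uncurryRight
    ((TensorProduct.mk A (SymPow A F n) F).compMultilinearMap
      ((symRel A F n).mkQ.compMultilinearMap (PiTensorProduct.tprod A)))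

def switchMultilinear (n : ℕ) : MultilinearMap A (fun _ : Fin (n + 1) => F) (RPow A F n) :=
  ∑ k : Fin n, (mkRMultilinear A F n).domDomCongr (Equiv.swap k.castSucc (Fin.last n))

def switchTensor (n : ℕ) : TPow A F n →ₗ[A] F →ₗ[A] RPow A F n :=
  PiTensorProduct.lift (switchMultilinear A F n).curryRight

variable {A F}

theorem mkRMultilinear_apply {n : ℕ} (m : Fin (n + 1) → F) :
    mkRMultilinear A F n m = mkR A F m :=
  rfl

theorem switchMultilinear_apply {n : ℕ} (m : Fin (n + 1) → F) :
    switchMultilinear A F n m = ∑ k : Fin n, mkR A F (m ∘ Equiv.swap k.castSucc (Fin.last n)) := by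
  simp [switchMultilinear, mkRMultilinear_apply, Function.comp_def]

theorem switchMultilinear_snoc {n : ℕ} (w : Fin n → F) (u : F) :
    switchMultilinear A F n (Fin.snoc w u) = ∑ k, mkS A F (Function.update w k u) ⊗ₜ[A] w k := by
  simp only [switchMultilinear_apply, mkR_snoc_comp_swap]

theorem symRel_le_ker_switchTensor (n : ℕ) :
    symRel A F n ≤ LinearMap.ker (switchTensor A F n) := by
  refine Submodule.span_le.mpr ?_
  rintro _ ⟨w, e, rfl⟩
  rw [SetLike.mem_coe, LinearMap.mem_ker, map_sub, sub_eq_zero]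
  refine LinearMap.ext fun u => ?_
  simp only [switchTensor, PiTensorProduct.lift.tprod, MultilinearMap.curryRight_apply,
    switchMultilinear_snoc, sum_mkS_update_tmul_comp_perm]

variable (A F)

-- `M₂` is given explicitly: otherwise unifying the two `AddCommMonoid` structures on
-- `F →ₗ[A] RPow A F n` (through `AddCommGroup` or not) times out.
def switchOp (n : ℕ) : RPow A F n →ₗ[A] RPow A F n :=
  TensorProduct.lift
    ((symRel A F n).liftQ (M₂ := F →ₗ[A] RPow A F n) (switchTensor A F n)
      (symRel_le_ker_switchTensor n))

variable {A F}

theorem switchOp_mkR {n : ℕ} (m : Fin (n + 1) → F) :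
    switchOp A F n (mkR A F m) = switchMultilinear A F n m := by
  rw [switchOp, mkR, TensorProduct.lift.tmul, mkS, Submodule.liftQ_apply, switchTensor,
    PiTensorProduct.lift.tprod, MultilinearMap.curryRight_apply]
  exact congrArg _ (Fin.snoc_init_self m)

end Switch

/-- The switch operator is a well-defined `A`-linear map on
`R^n(F) = S^{n-1}(F) ⊗ F` (here `RPow A F n = R^{n+1}(F)`). -/
theorem switch_wellDefined (n : ℕ) :
    ∃ σ : RPow A F n →ₗ[A] RPow A F n, IsSwitch A F n σ := by
  refine ⟨switchOp A F n, fun m => ?_⟩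
  rw [switchOp_mkR, switchMultilinear_apply, ← Fin.sum_univ_sub_eq_sum_Icc]
  simp only [mkR_rot_sub]

end
end

section
/- Let A := C[x,y]/(xy) and let D: A → Ω¹_{A/C} be the universal C-derivation into the module of Kähler differentials. Then there exists no D-connection, i.e., no C-linear map γ: Ω¹_{A/C} → Ω¹_{A/C} ⊗_A Ω¹_{A/C} satisfying γ(a·m) = D(a)⊗m + a·γ(m) for all a ∈ A and m ∈ Ω¹_{A/C}. -/
open scoped TensorProduct

noncomputable section

variable (A : Type) [CommRing A]
variable (F : Type) [AddCommGroup F] [Module A F]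

/-- The coordinate ring `ℂ[x,y]/(xy)` of two transversal lines in the plane. -/
abbrev NodalRing : Type :=
  MvPolynomial (Fin 2) ℂ ⧸
    Ideal.span ({MvPolynomial.X 0 * MvPolynomial.X 1} : Set (MvPolynomial (Fin 2) ℂ))


namespace NodalAux

open MvPolynomial

abbrev P2 := MvPolynomial (Fin 2) ℂ
abbrev I2 : Ideal P2 := Ideal.span ({MvPolynomial.X 0 * MvPolynomial.X 1} : Set P2)

def ev0 : P2 →ₐ[ℂ] ℂ := aeval (fun _ => (0:ℂ))

lemma ev0_I2 : ∀ a ∈ I2, ev0 a = 0 := by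
  intro a ha
  obtain ⟨b, rfl⟩ := Ideal.mem_span_singleton'.mp ha
  simp [ev0]

def eps : NodalRing →ₐ[ℂ] ℂ := Ideal.Quotient.liftₐ I2 ev0 ev0_I2

lemma eps_mk (p : P2) : eps (Ideal.Quotient.mk I2 p) = ev0 p := rfl

def dpre (i : Fin 2) : P2 →ₗ[ℂ] ℂ := ev0.toLinearMap ∘ₗ (pderiv i).toLinearMap

lemma dpre_I2 (i : Fin 2) : ∀ a ∈ I2, dpre i a = 0 := by
  intro a ha
  obtain ⟨b, rfl⟩ := Ideal.mem_span_singleton'.mp ha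
  fin_cases i <;> simp [dpre, pderiv_mul, ev0]

def dlin (i : Fin 2) : NodalRing →ₗ[ℂ] ℂ :=
  Submodule.liftQ (I2.restrictScalars ℂ) (dpre i)
    (fun a ha => by simpa using dpre_I2 i a ha)

lemma dlin_mk (i : Fin 2) (p : P2) :
    dlin i (Ideal.Quotient.mk I2 p) = ev0 (pderiv i p) := rfl

abbrev Pt : Type := ℂ

instance : Module NodalRing Pt := Module.compHom ℂ eps.toRingHom

lemma smul_pt (a : NodalRing) (m : Pt) : a • m = eps a * m := rfl

instance : IsScalarTower ℂ NodalRing Pt :=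
  ⟨fun c a m => by
    simp only [smul_pt, map_smul, smul_eq_mul]
    ring⟩

def dDer (i : Fin 2) : Derivation ℂ NodalRing Pt where
  toLinearMap := dlin i
  map_one_eq_zero' := by
    show dlin i (Ideal.Quotient.mk I2 1) = 0
    rw [dlin_mk]; simp
  leibniz' := by
    intro a b
    obtain ⟨p, rfl⟩ := Ideal.Quotient.mk_surjective a
    obtain ⟨q, rfl⟩ := Ideal.Quotient.mk_surjective b
    show dlin i (Ideal.Quotient.mk I2 p * Ideal.Quotient.mk I2 q) = _
    rw [← map_mul, dlin_mk, smul_pt, smul_pt, eps_mk, eps_mk]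
    show ev0 ((pderiv i) (p * q)) = _
    rw [dlin_mk, dlin_mk, Derivation.leibniz]
    simp [smul_eq_mul]

def lam (i : Fin 2) : Ω[NodalRing⁄ℂ] →ₗ[NodalRing] Pt :=
  (dDer i).liftKaehlerDifferential

lemma lam_D (i : Fin 2) (a : NodalRing) :
    lam i (KaehlerDifferential.D ℂ NodalRing a) = dlin i a :=
  Derivation.liftKaehlerDifferential_comp_D _ _

def phi : Ω[NodalRing⁄ℂ] →ₗ[NodalRing] Ω[NodalRing⁄ℂ] →ₗ[NodalRing] Pt :=
  LinearMap.mk₂ NodalRing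
    (fun ω η => lam 0 ω * lam 1 η + lam 1 ω * lam 0 η)
    (by intro ω ω' η; simp only [map_add]; ring)
    (by intro a ω η; simp only [map_smul, smul_pt]; ring)
    (by intro ω η η'; simp only [map_add]; ring)
    (by intro a ω η; simp only [map_smul, smul_pt]; ring)

def Phi : Ω[NodalRing⁄ℂ] ⊗[NodalRing] Ω[NodalRing⁄ℂ] →ₗ[NodalRing] Pt :=
  TensorProduct.lift phi

lemma Phi_tmul (ω η : Ω[NodalRing⁄ℂ]) :
    Phi (ω ⊗ₜ[NodalRing] η) = lam 0 ω * lam 1 η + lam 1 ω * lam 0 η := rfl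

end NodalAux

open NodalAux in
/-- For `A = ℂ[x,y]/(xy)` and the universal derivation
`D : A → Ω¹_{A/ℂ}` there exists no `D`-connection, i.e. no `ℂ`-linear map
`γ : Ω¹ → Ω¹ ⊗_A Ω¹` with `γ(a m) = D(a) ⊗ m + a γ(m)`. -/
theorem nodal_no_connection :
    ¬ ∃ γ : Ω[NodalRing⁄ℂ] →+ Ω[NodalRing⁄ℂ] ⊗[NodalRing] Ω[NodalRing⁄ℂ],
        (∀ (a : NodalRing) (m : Ω[NodalRing⁄ℂ]),
          γ (a • m) = KaehlerDifferential.D ℂ NodalRing a ⊗ₜ[NodalRing] m + a • γ m)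
        ∧ (∀ (c : ℂ) (m : Ω[NodalRing⁄ℂ]),
            γ (algebraMap ℂ NodalRing c • m) = algebraMap ℂ NodalRing c • γ m) := by
  classical
  rintro ⟨γ, h1, -⟩
  set Dn := KaehlerDifferential.D ℂ NodalRing with hDn
  set x : NodalRing := Ideal.Quotient.mk I2 (MvPolynomial.X 0) with hx
  set y : NodalRing := Ideal.Quotient.mk I2 (MvPolynomial.X 1) with hy
  have hxy : x * y = 0 := by
    rw [hx, hy, ← map_mul, Ideal.Quotient.eq_zero_iff_mem]
    exact Ideal.subset_span rfl
  have h0 : x • Dn y + y • Dn x = 0 := by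
    have h := Dn.leibniz x y
    rw [hxy, map_zero] at h
    exact h.symm
  have hγ : Dn x ⊗ₜ[NodalRing] Dn y + x • γ (Dn y)
      + (Dn y ⊗ₜ[NodalRing] Dn x + y • γ (Dn x)) = 0 := by
    rw [← h1, ← h1, ← map_add, h0, map_zero]
  have l0x : lam 0 (Dn x) = 1 := by
    rw [hDn, lam_D, hx, dlin_mk]; simp [ev0]
  have l1x : lam 1 (Dn x) = 0 := by
    rw [hDn, lam_D, hx, dlin_mk, MvPolynomial.pderiv_X]; simp [ev0]
  have l0y : lam 0 (Dn y) = 0 := by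
    rw [hDn, lam_D, hy, dlin_mk, MvPolynomial.pderiv_X]; simp [ev0]
  have l1y : lam 1 (Dn y) = 1 := by
    rw [hDn, lam_D, hy, dlin_mk]; simp [ev0]
  have hex : eps x = 0 := by rw [hx, eps_mk]; simp [ev0]
  have hey : eps y = 0 := by rw [hy, eps_mk]; simp [ev0]
  have h2 := congrArg Phi hγ
  rw [map_zero, map_add, map_add, map_add, map_smul, map_smul, Phi_tmul, Phi_tmul,
    smul_pt, smul_pt, l0x, l1x, l0y, l1y, hex, hey] at h2
  norm_num at h2

end
end

section
/- Let F be free over A with basis e_1,…,e_n, D = Σ D_i e_i with pairwise commuting B-derivations D_i of A, and γ the canonical D-connection γ(Σ a_i e_i) = Σ_{i,j} D_j(a_i) e_j⊗e_i. Then the iterated Hasse derivation h obtained from γ satisfies h_q(a) = Σ_{j_1,…,j_q} (D_{j_1}⋯D_{j_q}(a)/q!)·e_{j_1}⋯e_{j_q} in S^q(F), for every q ≥ 1 and a ∈ A. -/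
open scoped TensorProduct

noncomputable section

variable (A : Type) [CommRing A]
variable (F : Type) [AddCommGroup F] [Module A F]

/-- The word obtained from `m₀ ⋯ m_n` by replacing the letter `m_i` by the two
letters `u v`. -/
def insWord {n : ℕ} (m : Fin (n + 1) → F) (i : Fin (n + 1)) (u v : F) :
    Fin (n + 2) → F := fun j =>
  if _h1 : j.val < i.val then m ⟨j.val, by have := i.isLt; omega⟩
  else if j.val = i.val then u
  else if j.val = i.val + 1 then v
  else m ⟨j.val - 1, by have := j.isLt; omega⟩

/-- For `F = Aⁿ` free with basis `e₁, …, e_n`, `D = ∑ Dᵢ eᵢ` with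
pairwise commuting derivations `Dᵢ`, the canonical `D`-connection
`γ(∑ aᵢ eᵢ) = ∑_{i,j} D_j(aᵢ) e_j ⊗ eᵢ`, and `h` the iterated Hasse derivation obtained
from `γ` (via `∇`, `T_q = (1/q!)∇^q|_F`, `h_q = (1/q) T_{q-1} D`), one has
`h_q(a) = ∑_{j₁,…,j_q} (D_{j₁} ⋯ D_{j_q}(a) / q!) e_{j₁} ⋯ e_{j_q}` in `S^q(F)`. -/
theorem hasse_of_commuting_derivations [Algebra ℚ A]
    (B : Type) [CommRing B] [Algebra B A]
    (n : ℕ) (Dv : Fin n → Derivation B A A)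
    (hcomm : ∀ (i j : Fin n) (a : A), Dv i (Dv j a) = Dv j (Dv i a))
    (D : A → (Fin n → A)) (hD : ∀ (a : A) (i : Fin n), D a i = Dv i a)
    (e : Fin n → (Fin n → A)) (he : ∀ i, e i = Pi.single i 1)
    (γ : (Fin n → A) →+ ((Fin n → A) ⊗[A] (Fin n → A)))
    (hγ : ∀ f : Fin n → A,
      γ f = ∑ i, ∑ j, Dv j (f i) • (e j ⊗ₜ[A] e i))
    (ins : ∀ (k : ℕ) (m : Fin (k + 1) → (Fin n → A)) (i : Fin (k + 1)),
      (Fin n → A) ⊗[A] (Fin n → A) →ₗ[A] RPow A (Fin n → A) (k + 1))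
    (hins : ∀ k m i u v,
      ins k m i (u ⊗ₜ[A] v) = mkR A (Fin n → A) (insWord (Fin n → A) m i u v))
    (Del : ∀ k, RPow A (Fin n → A) k →+ RPow A (Fin n → A) (k + 1))
    (hDel : ∀ (k : ℕ) (m : Fin (k + 1) → (Fin n → A)),
      Del k (mkR A (Fin n → A) m) = ∑ i : Fin (k + 1), ins k m i (γ (m i)))
    (T : ∀ i, (Fin n → A) →+ RPow A (Fin n → A) i)
    (hT0 : ∀ m : Fin n → A,
      T 0 m = mkS A (Fin n → A) (fun i : Fin 0 => i.elim0) ⊗ₜ[A] m)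
    (hTsucc : ∀ (i : ℕ) (m : Fin n → A),
      T (i + 1) m = algebraMap ℚ A (1 / (i + 1 : ℚ)) • Del i (T i m))
    (π : ∀ k, RPow A (Fin n → A) k →ₗ[A] SymPow A (Fin n → A) (k + 1))
    (hπ : IsPi A (Fin n → A) π)
    (h : ∀ i, A →+ SymPow A (Fin n → A) i)
    (hh0 : ∀ a : A, h 0 a = a • mkS A (Fin n → A) (fun i : Fin 0 => i.elim0))
    (hhsucc : ∀ (i : ℕ) (a : A),
      h (i + 1) a = algebraMap ℚ A (1 / (i + 1 : ℚ)) • π i (T i (D a))) :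
    ∀ (q : ℕ), 1 ≤ q → ∀ a : A,
      h q a = ∑ js : Fin q → Fin n,
        (algebraMap ℚ A (1 / (Nat.factorial q : ℚ))
            * (List.ofFn js).foldr (fun j x => Dv j x) a) •
          mkS A (Fin n → A) (fun t => e (js t)) := by
  classical
  -- fold of commuting derivations commutes with a single derivation
  have foldD : ∀ (L : List (Fin n)) (j : Fin n) (x : A),
      L.foldr (fun i y => Dv i y) (Dv j x) = Dv j (L.foldr (fun i y => Dv i y) x) := by
    intro L
    induction L with
    | nil => intro j x; rfl
    | cons i L ih =>
      intro j x
      simp only [List.foldr_cons]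
      rw [ih, hcomm]
  have hDalg : ∀ (l : Fin n) (r : ℚ), Dv l (algebraMap ℚ A r) = 0 := by
    intro l r
    rw [Algebra.algebraMap_eq_smul_one, map_rat_smul (Dv l), Derivation.map_one_eq_zero,
      smul_zero]
  have hDa : ∀ b : A, D b = ∑ j, Dv j b • e j := by
    intro b
    funext i
    rw [hD, Finset.sum_apply]
    simp [he, Pi.single_apply]
  have hγs : ∀ (c : A) (j0 : Fin n),
      γ (c • e j0) = ∑ l, Dv l c • (e l ⊗ₜ[A] e j0) := by
    intro c j0
    have happ : ∀ i : Fin n, (c • e j0) i = if i = j0 then c else 0 := by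
      intro i
      simp [he, Pi.single_apply, mul_ite]
    rw [hγ]
    rw [Finset.sum_eq_single j0]
    · refine Finset.sum_congr rfl fun l _ => ?_
      rw [happ, if_pos rfl]
    · intro i _ hne
      refine Finset.sum_eq_zero fun l _ => ?_
      rw [happ, if_neg hne]
      simp
    · intro habs; exact absurd (Finset.mem_univ j0) habs
  have hγ0 : ∀ j0 : Fin n, γ (e j0) = 0 := by
    intro j0
    have := hγs 1 j0
    rw [one_smul] at this
    rw [this]
    simp [Derivation.map_one_eq_zero]
  have key : ∀ (k : ℕ) (b : A), T k (D b)
      = ∑ js : Fin (k + 1) → Fin n,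
          (algebraMap ℚ A (1 / (Nat.factorial k : ℚ))
              * (List.ofFn js).foldr (fun j x => Dv j x) b)
            • mkR A (Fin n → A) (fun t => e (js t)) := by
    intro k
    induction k with
    | zero =>
      intro b
      rw [hT0, hDa, TensorProduct.tmul_sum]
      refine Fintype.sum_bijective (fun j : Fin n => (fun _ : Fin 1 => j)) ?_ _ _ ?_
      · constructor
        · intro x y hxy
          exact congrFun hxy 0
        · intro g
          exact ⟨g 0, funext fun t => by rw [Subsingleton.elim t 0]⟩
      · intro j
        rw [TensorProduct.tmul_smul]
        simp only [List.ofFn_succ, List.ofFn_zero, List.foldr_cons, List.foldr_nil]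
        rw [show ((Nat.factorial 0 : ℕ) : ℚ) = 1 by norm_num, div_one, map_one, one_mul]
        congr 1
        show _ = mkS A (Fin n → A) (fun i : Fin 0 => e j) ⊗ₜ[A] e j
        congr 1
        exact congrArg (mkS A _) (funext fun i => i.elim0)
    | succ k ih =>
      intro b
      -- the scaled word
      have hscale : ∀ (c : A) (js : Fin (k + 1) → Fin n),
          c • mkR A (Fin n → A) (fun t => e (js t))
            = mkR A (Fin n → A)
                (fun t => if (t : ℕ) = k then c • e (js t) else e (js t)) := by
        intro c js
        simp only [mkR]
        rw [← TensorProduct.tmul_smul]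
        congr 1
        · congr 1
          funext i
          rw [if_neg (by have := i.isLt; simp only [Fin.coe_castSucc]; omega)]
        · rw [if_pos (by simp)]
      have step1 : ∀ js : Fin (k + 1) → Fin n,
          Del k ((algebraMap ℚ A (1 / (Nat.factorial k : ℚ))
              * (List.ofFn js).foldr (fun j x => Dv j x) b)
            • mkR A (Fin n → A) (fun t => e (js t)))
          = ∑ l : Fin n,
              (algebraMap ℚ A (1 / (Nat.factorial k : ℚ))
                  * Dv l ((List.ofFn js).foldr (fun j x => Dv j x) b))
                • mkR A (Fin n → A) (fun t : Fin (k + 2) =>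
                    e (if _h : (t : ℕ) < k then js ⟨t, by omega⟩
                       else if (t : ℕ) = k then l else js ⟨k, Nat.lt_succ_self k⟩)) := by
        intro js
        set c := algebraMap ℚ A (1 / (Nat.factorial k : ℚ))
            * (List.ofFn js).foldr (fun j x => Dv j x) b with hc
        rw [hscale c js, hDel, Fin.sum_univ_castSucc]
        have h1 : ∀ i : Fin k,
            ((fun t : Fin (k + 1) => if (t : ℕ) = k then c • e (js t) else e (js t)) i.castSucc)
              = e (js i.castSucc) := by
          intro i
          simp only
          rw [if_neg (by have := i.isLt; simp only [Fin.coe_castSucc]; omega)]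
        have hz : (∑ i : Fin k,
            ins k (fun t : Fin (k + 1) => if (t : ℕ) = k then c • e (js t) else e (js t))
              i.castSucc
              (γ ((fun t : Fin (k + 1) => if (t : ℕ) = k then c • e (js t) else e (js t))
                i.castSucc))) = 0 := by
          refine Finset.sum_eq_zero fun i _ => ?_
          rw [h1 i, hγ0, map_zero]
        rw [hz, zero_add]
        rw [if_pos (show ((Fin.last k : Fin (k + 1)) : ℕ) = k by simp), hγs, map_sum]
        refine Finset.sum_congr rfl fun l _ => ?_
        rw [map_smul, hins]
        have hderc : Dv l c = algebraMap ℚ A (1 / (Nat.factorial k : ℚ))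
            * Dv l ((List.ofFn js).foldr (fun j x => Dv j x) b) := by
          rw [hc, Derivation.leibniz, hDalg, smul_eq_mul, smul_eq_mul, mul_zero, add_zero]
        rw [hderc]
        congr 1
        have hword : insWord (Fin n → A)
            (fun t : Fin (k + 1) => if (t : ℕ) = k then c • e (js t) else e (js t))
            (Fin.last k) (e l) (e (js (Fin.last k)))
            = fun t : Fin (k + 2) =>
                e (if _h : (t : ℕ) < k then js ⟨t, by omega⟩
                   else if (t : ℕ) = k then l else js ⟨k, Nat.lt_succ_self k⟩) := by
          funext t
          simp only [insWord, Fin.val_last]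
          by_cases ht1 : (t : ℕ) < k
          · rw [dif_pos ht1, dif_pos ht1]
            rw [if_neg (by omega)]
          · rw [dif_neg ht1, dif_neg ht1]
            by_cases ht2 : (t : ℕ) = k
            · rw [if_pos ht2, if_pos ht2]
            · rw [if_neg ht2, if_neg ht2]
              have ht3 : (t : ℕ) = k + 1 := by have := t.isLt; omega
              rw [if_pos ht3]
              exact congrArg e (congrArg js (Fin.ext (by simp)))
        rw [hword]
      rw [hTsucc, ih b, map_sum]
      rw [Finset.sum_congr rfl fun js _ => step1 js]
      rw [Finset.smul_sum]
      have step2 : ∀ js : Fin (k + 1) → Fin n,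
          (algebraMap ℚ A (1 / ((k : ℚ) + 1)) •
            ∑ l : Fin n,
              (algebraMap ℚ A (1 / (Nat.factorial k : ℚ))
                  * Dv l ((List.ofFn js).foldr (fun j x => Dv j x) b))
                • mkR A (Fin n → A) (fun t : Fin (k + 2) =>
                    e (if _h : (t : ℕ) < k then js ⟨t, by omega⟩
                       else if (t : ℕ) = k then l else js ⟨k, Nat.lt_succ_self k⟩)))
          = ∑ l : Fin n,
              (algebraMap ℚ A (1 / (Nat.factorial (k + 1) : ℚ))
                  * Dv l ((List.ofFn js).foldr (fun j x => Dv j x) b))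
                • mkR A (Fin n → A) (fun t : Fin (k + 2) =>
                    e (if _h : (t : ℕ) < k then js ⟨t, by omega⟩
                       else if (t : ℕ) = k then l else js ⟨k, Nat.lt_succ_self k⟩)) := by
        intro js
        rw [Finset.smul_sum]
        refine Finset.sum_congr rfl fun l _ => ?_
        rw [smul_smul, ← mul_assoc, ← map_mul]
        congr 3
        rw [Nat.factorial_succ]
        push_cast
        rw [div_mul_div_comm, one_mul]
      rw [Finset.sum_congr rfl fun js _ => step2 js]
      have hbij : Function.Bijective (fun p : ((Fin (k + 1) → Fin n) × Fin n) =>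
          (fun j : Fin (k + 2) => if _h : (j : ℕ) < k then p.1 ⟨j, by omega⟩
            else if (j : ℕ) = k then p.2 else p.1 ⟨k, Nat.lt_succ_self k⟩)) := by
        rw [Fintype.bijective_iff_surjective_and_card]
        constructor
        · intro g
          refine ⟨⟨fun t : Fin (k + 1) => if _h : (t : ℕ) < k then g ⟨(t : ℕ), by omega⟩
              else g ⟨k + 1, by omega⟩, g ⟨k, by omega⟩⟩, ?_⟩
          funext j
          simp only [Fin.val_mk]
          by_cases h1 : (j : ℕ) < k
          · rw [dif_pos h1, dif_pos h1]
          · rw [dif_neg h1]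
            by_cases h2 : (j : ℕ) = k
            · rw [if_pos h2]
              exact congrArg g (Fin.ext (by simp only [Fin.val_mk]; omega))
            · rw [if_neg h2, dif_neg (lt_irrefl k)]
              exact congrArg g (Fin.ext (by simp only [Fin.val_mk]; have := j.isLt; omega))
        · simp only [Fintype.card_prod, Fintype.card_fun, Fintype.card_fin]
          ring
      have hlist : ∀ (js : Fin (k + 1) → Fin n) (l : Fin n),
          (List.ofFn (fun j : Fin (k + 2) => if _h : (j : ℕ) < k then js ⟨j, by omega⟩
              else if (j : ℕ) = k then l else js ⟨k, Nat.lt_succ_self k⟩)).foldr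
            (fun j x => Dv j x) b
          = Dv l ((List.ofFn js).foldr (fun j x => Dv j x) b) := by
        intro js l
        have e1 : (List.ofFn (fun j : Fin (k + 2) => if _h : (j : ℕ) < k then js ⟨j, by omega⟩
              else if (j : ℕ) = k then l else js ⟨k, Nat.lt_succ_self k⟩))
            = ((List.ofFn (fun i : Fin k => js i.castSucc)).concat l).concat
                (js ⟨k, Nat.lt_succ_self k⟩) := by
          have t1 := List.ofFn_succ' (fun j : Fin (k + 2) =>
            if _h : (j : ℕ) < k then js ⟨j, by omega⟩
            else if (j : ℕ) = k then l else js ⟨k, Nat.lt_succ_self k⟩)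
          have t2 := List.ofFn_succ' (fun i : Fin (k + 1) =>
            if _h : ((i.castSucc : Fin (k + 2)) : ℕ) < k then js ⟨(i.castSucc : Fin (k + 2)), by omega⟩
            else if ((i.castSucc : Fin (k + 2)) : ℕ) = k then l else js ⟨k, Nat.lt_succ_self k⟩)
          rw [t1, t2]
          congr 1
          · congr 1
            · refine congrArg List.ofFn (funext fun i2 => ?_)
              rw [dif_pos (show ((i2.castSucc.castSucc : Fin (k + 2)) : ℕ) < k by
                simp only [Fin.coe_castSucc]; exact i2.isLt)]
              exact congrArg js (Fin.ext (by simp))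
            · rw [dif_neg (show ¬ (((Fin.last k).castSucc : Fin (k + 2)) : ℕ) < k by
                simp only [Fin.coe_castSucc, Fin.val_last]; omega)]
              rw [if_pos (by simp only [Fin.coe_castSucc, Fin.val_last])]
          · rw [dif_neg (show ¬ ((Fin.last (k + 1) : Fin (k + 2)) : ℕ) < k by
              simp only [Fin.val_last]; omega)]
            rw [if_neg (show ¬ ((Fin.last (k + 1) : Fin (k + 2)) : ℕ) = k by
              simp only [Fin.val_last]; omega)]
        have e2 : List.ofFn js
            = (List.ofFn (fun i : Fin k => js i.castSucc)).concat (js (Fin.last k)) :=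
          List.ofFn_succ' js
        rw [e1, e2]
        simp only [List.concat_eq_append, List.foldr_append, List.foldr_cons, List.foldr_nil]
        rw [← foldD]
        rfl
      refine Eq.trans (Fintype.sum_prod_type (f := fun p : ((Fin (k + 1) → Fin n) × Fin n) =>
          (algebraMap ℚ A (1 / (Nat.factorial (k + 1) : ℚ))
              * Dv p.2 ((List.ofFn p.1).foldr (fun j x => Dv j x) b))
            • mkR A (Fin n → A) (fun t : Fin (k + 2) =>
                e (if _h : (t : ℕ) < k then p.1 ⟨t, by omega⟩
                   else if (t : ℕ) = k then p.2 else p.1 ⟨k, Nat.lt_succ_self k⟩)))).symm ?_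
      refine Fintype.sum_bijective _ hbij _ _ fun p => ?_
      rw [← hlist p.1 p.2]
  intro q hq a
  obtain ⟨k, rfl⟩ : ∃ k, q = k + 1 := ⟨q - 1, by omega⟩
  rw [hhsucc, key k a, map_sum, Finset.smul_sum]
  refine Finset.sum_congr rfl fun js _ => ?_
  rw [map_smul]
  have hπval : π k (mkR A (Fin n → A) (fun t => e (js t)))
      = mkS A (Fin n → A) (fun t => e (js t)) := by
    show π k (mkS A (Fin n → A) (fun i : Fin k => e (js i.castSucc)) ⊗ₜ[A] e (js (Fin.last k)))
      = _
    rw [hπ]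
    congr 1
    funext t
    refine Fin.lastCases ?_ ?_ t
    · rw [Fin.snoc_last]
    · intro i; rw [Fin.snoc_castSucc]
  rw [hπval, smul_smul, ← mul_assoc, ← map_mul]
  congr 3
  rw [Nat.factorial_succ]
  push_cast
  rw [div_mul_div_comm, one_mul]

end
end

section
/- In A = C[t^3,t^4,t^5] with dualizing module ω generated by η_1 = dt/t^2 and η_2 = dt/t^3, one has D(a)∧η_1 = 0 and D(a)∧η_2 = 0 in Λ²_A(ω) for every a ∈ A, where D: A → ω is the canonical derivation D(f) = f'(t)dt. -/
/-! For each `η ∈ {η₁, η₂}` it suffices that `D a ∈ A ∙ η`, since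
`ι (c • η) * ι η = c • ι η ^ 2 = 0`. By the Leibniz rule the `a` with `D a ∈ A ∙ η` form a
subalgebra, so only the generators matter, and there
`D (tⁿ) = n tⁿ⁻¹ dt = n tⁿ⁺¹ η₁ = n tⁿ⁺² η₂` with `tⁿ⁺¹, tⁿ⁺² ∈ A` because the semigroup
`⟨3, 4, 5⟩` contains every integer `≥ 3`. -/

noncomputable section

set_option synthInstance.maxHeartbeats 1000000
set_option maxHeartbeats 4000000

/-- The coordinate ring `ℂ[t³, t⁴, t⁵]` of the monomial space curve, as a subalgebra
of the field of rational functions (`t := X`). -/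
abbrev MonCurve : Subalgebra ℂ (RatFunc ℂ) :=
  Algebra.adjoin ℂ {RatFunc.X ^ 3, RatFunc.X ^ 4, RatFunc.X ^ 5}

/-- The dualizing module `ω`, realized Rosenlicht-style as the `MonCurve`-submodule of
(coefficients of) meromorphic differentials generated by `η₁ = dt/t²` and `η₂ = dt/t³`,
identifying `g·dt` with `g`. -/
abbrev MonOmega : Submodule MonCurve (RatFunc ℂ) :=
  Submodule.span MonCurve {RatFunc.X⁻¹ ^ 2, RatFunc.X⁻¹ ^ 3}

def eta1 : MonOmega := ⟨RatFunc.X⁻¹ ^ 2, Submodule.subset_span (Set.mem_insert _ _)⟩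

def eta2 : MonOmega :=
  ⟨RatFunc.X⁻¹ ^ 3, Submodule.subset_span (Set.mem_insert_of_mem _ rfl)⟩

def tcube : MonCurve := ⟨RatFunc.X ^ 3, Algebra.subset_adjoin (Set.mem_insert _ _)⟩

def tfourth : MonCurve :=
  ⟨RatFunc.X ^ 4, Algebra.subset_adjoin (Set.mem_insert_of_mem _ (Set.mem_insert _ _))⟩

def tfifth : MonCurve :=
  ⟨RatFunc.X ^ 5,
    Algebra.subset_adjoin (Set.mem_insert_of_mem _ (Set.mem_insert_of_mem _ rfl))⟩

theorem apply_mem_of_adjoin_eq_top {R A M : Type*} [CommSemiring R] [CommSemiring A]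
    [Algebra R A] [AddCommMonoid M] [Module A M] {D : A → M}
    (hadd : ∀ f g, D (f + g) = D f + D g) (hmul : ∀ f g, D (f * g) = f • D g + g • D f)
    (hconst : ∀ r : R, D (algebraMap R A r) = 0) {s : Set A} (hs : Algebra.adjoin R s = ⊤)
    {N : Submodule A M} (hgen : ∀ x ∈ s, D x ∈ N) (a : A) : D a ∈ N := by
  have ha : a ∈ Algebra.adjoin R s := hs ▸ Algebra.mem_top
  induction ha using Algebra.adjoin_induction with
  | mem x hx => exact hgen x hx
  | algebraMap r => rw [hconst]; exact N.zero_mem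
  | add x y _ _ hx hy => rw [hadd]; exact N.add_mem hx hy
  | mul x y _ _ hx hy => rw [hmul]; exact N.add_mem (N.smul_mem x hy) (N.smul_mem y hx)

theorem ExteriorAlgebra.ι_mul_ι_eq_zero_of_mem_span_singleton {R M : Type*} [CommRing R]
    [AddCommGroup M] [Module R M] {x y : M} (h : x ∈ R ∙ y) : ι R x * ι R y = 0 := by
  obtain ⟨c, rfl⟩ := Submodule.mem_span_singleton.mp h
  rw [map_smul, smul_mul_assoc, ι_sq_zero, smul_zero]

theorem X_pow_mem_monCurve {n : ℕ} (hn : 3 ≤ n) : (RatFunc.X ^ n : RatFunc ℂ) ∈ MonCurve := by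
  induction n using Nat.strong_induction_on with
  | _ n ih =>
    by_cases hn5 : n ≤ 5
    · apply Algebra.subset_adjoin
      interval_cases n <;> simp
    · have h3 : n = 3 + (n - 3) := by omega
      rw [h3, pow_add]
      exact Subalgebra.mul_mem _ (ih 3 (by omega) le_rfl) (ih (n - 3) (by omega) (by omega))

theorem mem_span_of_coe_eq_natCast_mul_X_pow {m e : MonOmega} {k p n : ℕ}
    (he : (e : RatFunc ℂ) = (RatFunc.X : RatFunc ℂ)⁻¹ ^ k)
    (hm : (m : RatFunc ℂ) = n * (RatFunc.X : RatFunc ℂ) ^ p)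
    (hpk : 3 ≤ p + k) : m ∈ MonCurve ∙ e := by
  refine Submodule.mem_span_singleton.mpr
    ⟨n * ⟨RatFunc.X ^ (p + k), X_pow_mem_monCurve hpk⟩, Subtype.ext ?_⟩
  have hX : (RatFunc.X : RatFunc ℂ) ≠ 0 := RatFunc.X_ne_zero
  rw [Submodule.coe_smul, he, hm, Subalgebra.smul_def, inv_pow]
  push_cast
  rw [smul_eq_mul, pow_add]
  field_simp

/-- In `A = ℂ[t³,t⁴,t⁵]` with dualizing module `ω` generated by
`η₁ = dt/t²` and `η₂ = dt/t³`, the canonical derivation `D(f) = f'(t) dt` satisfies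
`D(a) ∧ η₁ = 0` and `D(a) ∧ η₂ = 0` in `Λ²_A(ω)` for every `a ∈ A`. -/
theorem monomial_curve_wedge_vanishes
    (D : MonCurve → MonOmega)
    (Dadd : ∀ f g : MonCurve, D (f + g) = D f + D g)
    (Dleib : ∀ f g : MonCurve, D (f * g) = f • D g + g • D f)
    (Dconst : ∀ c : ℂ, D (algebraMap ℂ MonCurve c) = 0)
    (D3 : (D tcube : RatFunc ℂ) = 3 * RatFunc.X ^ 2)
    (D4 : (D tfourth : RatFunc ℂ) = 4 * RatFunc.X ^ 3)
    (D5 : (D tfifth : RatFunc ℂ) = 5 * RatFunc.X ^ 4) :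
    ∀ a : MonCurve,
      ExteriorAlgebra.ι MonCurve (D a) * ExteriorAlgebra.ι MonCurve eta1 = 0
      ∧ ExteriorAlgebra.ι MonCurve (D a) * ExteriorAlgebra.ι MonCurve eta2 = 0 := by
  have D_mem_span : ∀ (η : MonOmega) (k : ℕ), (η : RatFunc ℂ) = RatFunc.X⁻¹ ^ k → 1 ≤ k →
      ∀ a, D a ∈ MonCurve ∙ η := by
    intro η k hη hk
    refine apply_mem_of_adjoin_eq_top Dadd Dleib Dconst Algebra.adjoin_adjoin_coe_preimage ?_
    rintro x (hx | hx | hx)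
    · rw [show x = tcube from Subtype.ext hx]
      exact mem_span_of_coe_eq_natCast_mul_X_pow hη (by exact_mod_cast D3) (by omega)
    · rw [show x = tfourth from Subtype.ext hx]
      exact mem_span_of_coe_eq_natCast_mul_X_pow hη (by exact_mod_cast D4) (by omega)
    · rw [show x = tfifth from Subtype.ext hx]
      exact mem_span_of_coe_eq_natCast_mul_X_pow hη (by exact_mod_cast D5) (by omega)
  refine fun a => ⟨?_, ?_⟩ <;> apply ExteriorAlgebra.ι_mul_ι_eq_zero_of_mem_span_singleton
  exacts [D_mem_span eta1 2 rfl (by norm_num) a, D_mem_span eta2 3 rfl (by norm_num) a]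

end
end
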